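/- arXiv:2202.08555 — 2 statements merged into one kernel-verified Lean document; each statement's English description precedes it below -/
import Mathlib

section
/- Transitivity propagation in tree decompositions: let S be a binary relation on α with a tree decomposition (tree T, bags λ) such that every S-edge is contained in some bag and the connectivity condition holds. Suppose S satisfies bag-transitivity: for every node v and every S-path x₀, x₁, ..., xₙ (n ≥ 1) with all xᵢ ∈ λ(v), we have S x₀ xₙ. Then for any elements x, y lying together in some bag, if there is an S-path from x to y (through arbitrary elements), then S x y. -/
/-!
Take an `S`-path from `x` to `y` with `x, y` in the bag of `v`. If some interior point of the path
also lies in that bag, split the path there and use transitivity inside the bag. Otherwise the bags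
of the path's edges are joined to each other by walks avoiding `v`, so in the forest they all lie
behind one neighbour `w` of `v`; the walks from them to `v` inside the bags of `x` and of `y` pass
through `w`, so `x, y` lie in the bag of `w`, which is closer to the first edge bag. Induct on the
length of the path, and for a fixed path on that distance.
-/

namespace SimpleGraph

variable {V : Type*} {T : SimpleGraph V} {u v w : V}

theorem IsAcyclic.mem_support_of_notMem_support_of_adj (hT : T.IsAcyclic) (hvw : T.Adj v w)
    (q : T.Walk u w) (hq : v ∉ q.support) (r : T.Walk u v) : w ∈ r.support := by
  classical
  exact r.support_bypass_subset_support <| hT.mem_support_of_ne_mem_support_of_adj_of_isPath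
    r.bypass_isPath q.bypass_isPath hvw fun hv => hq (q.support_bypass_subset_support hv)

theorem Reachable.exists_adj_dist_lt (h : T.Reachable v u) (hne : u ≠ v) :
    ∃ w, T.Adj v w ∧ T.dist w u < T.dist v u ∧ ∃ q : T.Walk u w, v ∉ q.support := by
  obtain ⟨p, hp, hlen⟩ := h.exists_path_of_dist
  cases p with
  | nil => exact absurd rfl hne
  | @cons _ w _ hvw q =>
    refine ⟨w, hvw, ?_, q.reverse, by simpa using ((Walk.cons_isPath_iff hvw q).mp hp).2⟩
    have := T.dist_le q
    simp only [Walk.length_cons] at hlen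
    omega

end SimpleGraph

theorem Relation.TransGen.exists_path {α : Type*} {S : α → α → Prop} {a b : α}
    (h : Relation.TransGen S a b) :
    ∃ n, 0 < n ∧ ∃ x : ℕ → α, x 0 = a ∧ x n = b ∧ ∀ k < n, S (x k) (x (k + 1)) := by
  induction h using Relation.TransGen.head_induction_on with
  | @single a h => exact ⟨1, one_pos, fun k => if k = 0 then a else b, by simp, by simp, by simpa⟩
  | @head a c hac _ ih =>
    obtain ⟨n, -, x, rfl, rfl, hx⟩ := ih
    refine ⟨n + 1, n.succ_pos, fun | 0 => a | k + 1 => x k, rfl, rfl, ?_⟩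
    rintro (_ | k) hk
    exacts [hac, hx k (by omega)]

structure IsTreeDecomposition {V α : Type*} (T : SimpleGraph V) (bag : V → Set α)
    (S : α → α → Prop) : Prop where
  isAcyclic : T.IsAcyclic
  exists_bag_of_rel : ∀ x y, S x y → ∃ v, x ∈ bag v ∧ y ∈ bag v
  exists_walk_of_mem : ∀ (a : α) (u v : V), a ∈ bag u → a ∈ bag v →
    ∃ w : T.Walk u v, ∀ x ∈ w.support, a ∈ bag x

namespace IsTreeDecomposition

variable {V α : Type*} {T : SimpleGraph V} {bag : V → Set α} {S : α → α → Prop}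
  {x : ℕ → α} {n i j : ℕ} {u v : V}

theorem exists_walk_notMem_support (hD : IsTreeDecomposition T bag S)
    (hx : ∀ k < n, S (x k) (x (k + 1))) (hij : i ≤ j) (hjn : j ≤ n)
    (hout : ∀ k, i ≤ k → k ≤ j → x k ∉ bag v) {u' : V} (hu : x i ∈ bag u) (hu' : x j ∈ bag u') :
    ∃ q : T.Walk u u', v ∉ q.support := by
  induction j, hij using Nat.le_induction generalizing u' with
  | base =>
    obtain ⟨q, hq⟩ := hD.exists_walk_of_mem _ u u' hu hu'
    exact ⟨q, fun hv => hout i le_rfl le_rfl (hq v hv)⟩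
  | succ j hij ih =>
    obtain ⟨u'', hj, hj'⟩ := hD.exists_bag_of_rel _ _ (hx j (by omega))
    obtain ⟨q, hq⟩ := ih (by omega) (fun k hik hkj => hout k hik (by omega)) hj
    obtain ⟨r, hr⟩ := hD.exists_walk_of_mem _ u'' u' hj' hu'
    refine ⟨q.append r, ?_⟩
    rw [SimpleGraph.Walk.mem_support_append_iff]
    exact fun hv => hv.elim hq fun hv => hout (j + 1) (by omega) le_rfl (hr v hv)

theorem exists_dist_lt_of_forall_notMem (hD : IsTreeDecomposition T bag S)
    (hx : ∀ k < n, S (x k) (x (k + 1))) (hij : i + 1 < j) (hjn : j ≤ n)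
    (hout : ∀ k, i < k → k < j → x k ∉ bag v) (hi : x i ∈ bag v) (hj : x j ∈ bag v)
    (hu : x i ∈ bag u) (hu' : x (i + 1) ∈ bag u) :
    ∃ w, T.dist w u < T.dist v u ∧ x i ∈ bag w ∧ x j ∈ bag w := by
  obtain ⟨r, hr⟩ := hD.exists_walk_of_mem _ u v hu hi
  have hne : u ≠ v := by rintro rfl; exact hout (i + 1) (by omega) hij hu'
  obtain ⟨w, hvw, hdist, q, hq⟩ := r.reverse.reachable.exists_adj_dist_lt hne
  obtain ⟨u', hu'₁, hu'₂⟩ := hD.exists_bag_of_rel _ _ (hx (j - 1) (by omega))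
  rw [Nat.sub_add_cancel (by omega)] at hu'₂
  obtain ⟨c, hc⟩ := hD.exists_walk_notMem_support hx (by omega) (by omega)
    (fun k hik hkj => hout k (by omega) (by omega)) hu' hu'₁
  obtain ⟨r', hr'⟩ := hD.exists_walk_of_mem _ u' v hu'₂ hj
  have hq' : v ∉ (c.reverse.append q).support := by simp [hc, hq]
  exact ⟨w, hdist, hr w (hD.isAcyclic.mem_support_of_notMem_support_of_adj hvw q hq r),
    hr' w (hD.isAcyclic.mem_support_of_notMem_support_of_adj hvw _ hq' r')⟩

theorem exists_bag_mem_interior (hD : IsTreeDecomposition T bag S)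
    (hx : ∀ k < n, S (x k) (x (k + 1))) (hij : i + 1 < j) (hjn : j ≤ n)
    (hi : x i ∈ bag v) (hj : x j ∈ bag v) :
    ∃ w m, i < m ∧ m < j ∧ x i ∈ bag w ∧ x m ∈ bag w ∧ x j ∈ bag w := by
  obtain ⟨u, hu, hu'⟩ := hD.exists_bag_of_rel _ _ (hx i (by omega))
  induction hd : T.dist v u using Nat.strong_induction_on generalizing v with
  | _ d ih =>
    by_cases hin : ∃ m, i < m ∧ m < j ∧ x m ∈ bag v
    · obtain ⟨m, him, hmj, hm⟩ := hin
      exact ⟨v, m, him, hmj, hi, hm, hj⟩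
    · push Not at hin
      obtain ⟨w, hdist, hwi, hwj⟩ :=
        hD.exists_dist_lt_of_forall_notMem hx hij hjn hin hi hj hu hu'
      exact ih _ (hd ▸ hdist) hwi hwj rfl

theorem rel_of_path (hD : IsTreeDecomposition T bag S)
    (htrans : ∀ v, ∀ a ∈ bag v, ∀ b ∈ bag v, ∀ c ∈ bag v, S a b → S b c → S a c)
    (hx : ∀ k < n, S (x k) (x (k + 1))) (hij : i < j) (hjn : j ≤ n)
    (hi : x i ∈ bag v) (hj : x j ∈ bag v) : S (x i) (x j) := by
  induction hd : j - i using Nat.strong_induction_on generalizing i j v with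
  | _ d ih =>
    obtain rfl | hij := (Nat.succ_le_of_lt hij).eq_or_lt
    · exact hx i (by omega)
    obtain ⟨w, m, him, hmj, hwi, hwm, hwj⟩ := hD.exists_bag_mem_interior hx hij hjn hi hj
    exact htrans w _ hwi _ hwm _ hwj (ih _ (by omega) him (by omega) hwi hwm rfl)
      (ih _ (by omega) hmj hjn hwm hwj rfl)

end IsTreeDecomposition

theorem transitivity_propagation_in_tree_decomposition_general
    {V α : Type*} (T : SimpleGraph V)
    (hacyc : T.IsAcyclic)
    (bag : V → Set α) (S : α → α → Prop)
    (hedge : ∀ x y, S x y → ∃ v, x ∈ bag v ∧ y ∈ bag v)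
    (hconn : ∀ (a : α) (u v : V), a ∈ bag u → a ∈ bag v →
      ∃ w : T.Walk u v, ∀ x ∈ w.support, a ∈ bag x)
    (hbagtrans : ∀ (v : V) (n : ℕ) (x : Fin (n + 1) → α), 1 ≤ n →
      (∀ i, x i ∈ bag v) →
      (∀ i : Fin n, S (x i.castSucc) (x i.succ)) →
      S (x 0) (x (Fin.last n))) :
    ∀ (x y : α) (v : V), x ∈ bag v → y ∈ bag v →
      Relation.TransGen S x y → S x y := by
  intro x y v hx hy hxy
  have htrans : ∀ v, ∀ a ∈ bag v, ∀ b ∈ bag v, ∀ c ∈ bag v, S a b → S b c → S a c :=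
    fun v a ha b hb c hc hab hbc => by
      simpa using hbagtrans v 2 ![a, b, c] one_le_two
        (by intro i; fin_cases i <;> assumption) (by intro i; fin_cases i <;> assumption)
  obtain ⟨n, hn, f, rfl, rfl, hf⟩ := hxy.exists_path
  exact IsTreeDecomposition.rel_of_path ⟨hacyc, hedge, hconn⟩ htrans hf hn le_rfl hx hy

/-- Transitivity propagation in tree decompositions: bag-transitivity implies
that any S-path between two elements of a common bag yields a direct S-edge. -/
theorem transitivity_propagation_in_tree_decomposition
    {V α : Type*} (T : SimpleGraph V)
    (hconnT : T.Connected) (hacyc : T.IsAcyclic)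
    (bag : V → Set α) (S : α → α → Prop)
    (hedge : ∀ x y, S x y → ∃ v, x ∈ bag v ∧ y ∈ bag v)
    (hconn : ∀ (a : α) (u v : V), a ∈ bag u → a ∈ bag v →
      ∃ w : T.Walk u v, ∀ x ∈ w.support, a ∈ bag x)
    (hbagtrans : ∀ (v : V) (n : ℕ) (x : Fin (n + 1) → α), 1 ≤ n →
      (∀ i, x i ∈ bag v) →
      (∀ i : Fin n, S (x i.castSucc) (x i.succ)) →
      S (x 0) (x (Fin.last n))) :
    ∀ (x y : α) (v : V), x ∈ bag v → y ∈ bag v →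
      Relation.TransGen S x y → S x y :=
  transitivity_propagation_in_tree_decomposition_general T hacyc bag S hedge hconn hbagtrans
end

section
/- Linear-order encoding of 3-colorability: a finite simple graph G = (V, E) is 3-colorable if and only if there exist a type L with a strict linear order <, two elements b₁ < b₂ of L, and a function f : V → L with f(v) ≠ b₁ and f(v) ≠ b₂ for all v, such that no two adjacent vertices u, v ∈ E fall into the same interval among: (elements < b₁), (elements strictly between b₁ and b₂), and (elements > b₂). -/
/-!
Colour `i` is encoded by the point `2 i` of `ℕ`, with markers `1` and `3`. Conversely, an element
different from both markers lies in one of the three intervals by trichotomy alone, and the index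
of that interval is a 3-colouring.
-/

section Zones

variable {L : Type*} (lt : L → L → Prop) (b₁ b₂ : L)

def SameZone (x y : L) : Prop :=
  (lt x b₁ ∧ lt y b₁) ∨ ((lt b₁ x ∧ lt x b₂) ∧ (lt b₁ y ∧ lt y b₂)) ∨ (lt b₂ x ∧ lt b₂ y)

open Classical in
noncomputable def zone (x : L) : Fin 3 :=
  if lt x b₁ then 0 else if lt x b₂ then 1 else 2

variable {lt b₁ b₂}

theorem zone_spec (htotal : ∀ a b, a ≠ b → lt a b ∨ lt b a) {x : L} (hx₁ : x ≠ b₁)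
    (hx₂ : x ≠ b₂) :
    (zone lt b₁ b₂ x = 0 → lt x b₁) ∧ (zone lt b₁ b₂ x = 1 → lt b₁ x ∧ lt x b₂) ∧
      (zone lt b₁ b₂ x = 2 → lt b₂ x) := by
  unfold zone
  by_cases h₁ : lt x b₁
  · simp [h₁]
  have hb₁x : lt b₁ x := (htotal x b₁ hx₁).resolve_left h₁
  by_cases h₂ : lt x b₂
  · simp [h₁, h₂, hb₁x]
  · simp [h₁, h₂, (htotal x b₂ hx₂).resolve_left h₂]

theorem sameZone_of_zone_eq (htotal : ∀ a b, a ≠ b → lt a b ∨ lt b a) {x y : L}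
    (hx₁ : x ≠ b₁) (hx₂ : x ≠ b₂) (hy₁ : y ≠ b₁) (hy₂ : y ≠ b₂)
    (h : zone lt b₁ b₂ x = zone lt b₁ b₂ y) : SameZone lt b₁ b₂ x y := by
  obtain ⟨hx0, hx1, hx2⟩ := zone_spec htotal hx₁ hx₂
  obtain ⟨hy0, hy1, hy2⟩ := zone_spec htotal hy₁ hy₂
  rw [h] at hx0 hx1 hx2
  unfold SameZone
  match hz : zone lt b₁ b₂ y with
  | 0 => exact .inl ⟨hx0 hz, hy0 hz⟩
  | 1 => exact .inr (.inl ⟨hx1 hz, hy1 hz⟩)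
  | 2 => exact .inr (.inr ⟨hx2 hz, hy2 hz⟩)

end Zones

theorem eq_of_sameZone_two_mul {i j : Fin 3}
    (h : SameZone (· < ·) 1 3 (2 * i.val) (2 * j.val)) : i = j := by
  unfold SameZone at h
  have := i.isLt
  have := j.isLt
  ext
  omega

theorem three_colorable_iff_linear_order_encoding_general
    {V : Type} (G : SimpleGraph V) :
    (∃ c : V → Fin 3, ∀ u v, G.Adj u v → c u ≠ c v) ↔
    (∃ (L : Type) (lt : L → L → Prop) (b₁ b₂ : L) (f : V → L),
      (∀ a, ¬ lt a a) ∧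
      (∀ a b c, lt a b → lt b c → lt a c) ∧
      (∀ a b, a ≠ b → lt a b ∨ lt b a) ∧
      lt b₁ b₂ ∧
      (∀ v, f v ≠ b₁ ∧ f v ≠ b₂) ∧
      (∀ u v, G.Adj u v →
        ¬ ((lt (f u) b₁ ∧ lt (f v) b₁) ∨
           ((lt b₁ (f u) ∧ lt (f u) b₂) ∧ (lt b₁ (f v) ∧ lt (f v) b₂)) ∨
           (lt b₂ (f u) ∧ lt b₂ (f v))))) := by
  constructor
  · rintro ⟨c, hc⟩
    exact ⟨ℕ, (· < ·), 1, 3, fun v => 2 * (c v).val, lt_irrefl, fun _ _ _ => lt_trans,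
      fun _ _ => lt_or_gt_of_ne, by norm_num, fun _ => by dsimp only; omega,
      fun u v huv h => hc u v huv (eq_of_sameZone_two_mul h)⟩
  · rintro ⟨L, lt, b₁, b₂, f, -, -, htotal, -, hf, hadj⟩
    exact ⟨fun v => zone lt b₁ b₂ (f v), fun u v huv h =>
      hadj u v huv (sameZone_of_zone_eq htotal (hf u).1 (hf u).2 (hf v).1 (hf v).2 h)⟩

/-- Linear-order encoding of 3-colorability. -/
theorem three_colorable_iff_linear_order_encoding
    {V : Type} [Fintype V] (G : SimpleGraph V) :
    (∃ c : V → Fin 3, ∀ u v, G.Adj u v → c u ≠ c v) ↔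
    (∃ (L : Type) (lt : L → L → Prop) (b₁ b₂ : L) (f : V → L),
      (∀ a, ¬ lt a a) ∧
      (∀ a b c, lt a b → lt b c → lt a c) ∧
      (∀ a b, a ≠ b → lt a b ∨ lt b a) ∧
      lt b₁ b₂ ∧
      (∀ v, f v ≠ b₁ ∧ f v ≠ b₂) ∧
      (∀ u v, G.Adj u v →
        ¬ ((lt (f u) b₁ ∧ lt (f v) b₁) ∨
           ((lt b₁ (f u) ∧ lt (f u) b₂) ∧ (lt b₁ (f v) ∧ lt (f v) b₂)) ∨
           (lt b₂ (f u) ∧ lt b₂ (f v))))) :=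
  three_colorable_iff_linear_order_encoding_general G
end
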